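/- Let θ̄* ∈ ℝ², b*, γ ∈ ℝ with γ > 0 and b* ≠ 0, let φₙ : ℝ → ℝ² and uₙ : ℝ → ℝ be continuous, and let θ̄ : ℝ → ℝ² and b : ℝ → ℝ be differentiable. For each t define m(t) = √(1 + ‖φₙ(t)‖² + uₙ(t)²), e(t) = b*·(uₙ(t) − ⟨θ̄*, φₙ(t)⟩), ê(t) = b(t)·(uₙ(t) − ⟨θ̄(t), φₙ(t)⟩), and ε(t) = (e(t) − ê(t))/m(t)². Suppose the adaptation law holds: θ̄'(t) = −γ·sgn(b*)·ε(t)·φₙ(t) and b'(t) = γ·(uₙ(t) − ⟨θ̄(t), φₙ(t)⟩)·ε(t) for all t. Then V(t) = (|b*|·‖θ̄(t) − θ̄*‖² + (b(t) − b*)²)/(2γ) is differentiable with V'(t) = −ε(t)²·m(t)² ≤ 0 for all t; in particular V is nonincreasing. -/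
import Mathlib


open RealInnerProductSpace

/-- Along the normalized CRM adaptation law
`θ̄' = −γ·sgn(b*)·ε·φₙ`, `b' = γ·(uₙ − ⟨θ̄, φₙ⟩)·ε`, the Lyapunov function
`V = (|b*|·‖θ̄ − θ̄*‖² + (b − b*)²)/(2γ)` satisfies `V' = −ε²·m² ≤ 0`,
hence is nonincreasing. -/
theorem lyapunov_monotone_normalized_law
    (θs : EuclideanSpace ℝ (Fin 2)) (bstar γ : ℝ) (hγ : 0 < γ) (hbstar : bstar ≠ 0)
    (φn : ℝ → EuclideanSpace ℝ (Fin 2)) (un : ℝ → ℝ)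
    (hφn : Continuous φn) (hun : Continuous un)
    (θ : ℝ → EuclideanSpace ℝ (Fin 2)) (b : ℝ → ℝ)
    (hθ : Differentiable ℝ θ) (hb : Differentiable ℝ b)
    (m e ehat ε : ℝ → ℝ)
    (hm : ∀ t, m t = Real.sqrt (1 + ‖φn t‖ ^ 2 + un t ^ 2))
    (he : ∀ t, e t = bstar * (un t - ⟪θs, φn t⟫))
    (hehat : ∀ t, ehat t = b t * (un t - ⟪θ t, φn t⟫))
    (hε : ∀ t, ε t = (e t - ehat t) / m t ^ 2)
    (hθ' : ∀ t, deriv θ t = -(γ * Real.sign bstar * ε t) • φn t)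
    (hb' : ∀ t, deriv b t = γ * (un t - ⟪θ t, φn t⟫) * ε t)
    (V : ℝ → ℝ)
    (hV : ∀ t, V t = (|bstar| * ‖θ t - θs‖ ^ 2 + (b t - bstar) ^ 2) / (2 * γ)) :
    (∀ t, HasDerivAt V (-(ε t ^ 2 * m t ^ 2)) t) ∧
      (∀ t, -(ε t ^ 2 * m t ^ 2) ≤ 0) ∧
      (∀ s t : ℝ, s ≤ t → V t ≤ V s) := by
  have hsign : Real.sign bstar * |bstar| = bstar := by
    rcases lt_or_gt_of_ne hbstar with h | h
    · rw [Real.sign_of_neg h, abs_of_neg h]; ring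
    · rw [Real.sign_of_pos h, abs_of_pos h]; ring
  have hm2 : ∀ t, m t ^ 2 = 1 + ‖φn t‖ ^ 2 + un t ^ 2 := by
    intro t
    rw [hm t, Real.sq_sqrt]
    positivity
  have hm2pos : ∀ t, 0 < m t ^ 2 := by
    intro t; rw [hm2 t]; positivity
  have hεm : ∀ t, ε t * m t ^ 2 = e t - ehat t := by
    intro t
    rw [hε t, div_mul_cancel₀ _ (hm2pos t).ne']
  have hVW : V = fun t =>
      (|bstar| * ⟪θ t - θs, θ t - θs⟫ + (b t - bstar) ^ 2) / (2 * γ) := by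
    funext t
    rw [hV t, real_inner_self_eq_norm_sq]
  have key : ∀ t, HasDerivAt V (-(ε t ^ 2 * m t ^ 2)) t := by
    intro t
    have hθt : HasDerivAt (fun s => θ s - θs) (deriv θ t) t :=
      (hθ t).hasDerivAt.sub_const θs
    have hinner : HasDerivAt (fun s => ⟪θ s - θs, θ s - θs⟫)
        (⟪θ t - θs, deriv θ t⟫ + ⟪deriv θ t, θ t - θs⟫) t := hθt.inner ℝ hθt
    have hbt : HasDerivAt (fun s => (b s - bstar) ^ 2)
        (2 * (b t - bstar) ^ 1 * deriv b t) t :=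
      ((hb t).hasDerivAt.sub_const bstar).pow 2
    have hW : HasDerivAt V
        ((|bstar| * (⟪θ t - θs, deriv θ t⟫ + ⟪deriv θ t, θ t - θs⟫)
          + 2 * (b t - bstar) ^ 1 * deriv b t) / (2 * γ)) t := by
      rw [hVW]
      exact ((hinner.const_mul |bstar|).add hbt).div_const (2 * γ)
    convert hW using 1
    rw [hθ' t, hb' t]
    rw [inner_smul_right, inner_smul_left]
    have h1 : ⟪θ t - θs, φn t⟫ = ⟪θ t, φn t⟫ - ⟪θs, φn t⟫ := inner_sub_left _ _ _
    have h2 : ⟪φn t, θ t - θs⟫ = ⟪θ t, φn t⟫ - ⟪θs, φn t⟫ := by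
      rw [real_inner_comm]; exact h1
    rw [h1, h2]
    simp only [RCLike.conj_to_real, pow_one]
    have hεm' := hεm t
    rw [he t, hehat t] at hεm'
    rw [eq_div_iff (by positivity : (2 * γ) ≠ 0)]
    linear_combination (-(2 * γ * ε t)) * hεm'
      + (2 * γ * ε t * (⟪θ t, φn t⟫ - ⟪θs, φn t⟫)) * hsign
  refine ⟨key, fun t => neg_nonpos.mpr (by positivity), ?_⟩
  intro s t hst
  exact antitoneOn_of_hasDerivWithinAt_nonpos (convex_Icc s t)
    (fun u hu => (key u).continuousAt.continuousWithinAt)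
    (fun u hu => ((key u).hasDerivWithinAt).mono interior_subset)
    (fun u hu => neg_nonpos.mpr (by positivity))
    (Set.left_mem_Icc.2 hst) (Set.right_mem_Icc.2 hst) hst
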